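/- arXiv:2312.14271 — 9 statements merged into one kernel-verified Lean document; each statement's English description precedes it below -/
import Mathlib

section
/- Let n be a natural number and let M be a symmetric negative definite n×n rational matrix. Then for every vector L ∈ ℚⁿ there exists a unique pair (P, N) of vectors in ℚⁿ such that L = P + N, P is nef with respect to M, N is effective, and P·N = 0 (Zariski decomposition). -/
open Matrix

/-!
Write `Q x = x ⬝ᵥ M *ᵥ x`. The nef part `P` is the maximizer of the strictly concave
function `Q` on the region `{P ≤ L}`: nefness and `P · N = 0` are its optimality conditions.
With no compactness over an ordered field, the maximum is found among finitely many
candidates, the critical points of `Q` on the faces of the region, each the solution of a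
nonsingular linear system. Moving from any point of the region towards the critical point of
its face increases `Q`, so either that critical point lies in the region or the move reaches
a smaller face; hence every point of the region is dominated by a candidate.
Uniqueness: for two decompositions, `Q (N₁ - N₂) = N₁ · P₂ + N₂ · P₁ ≥ 0`.
-/

variable {ι K : Type*} [Fintype ι]

theorem dotProduct_eq_zero_of_forall_eq_zero_or [NonUnitalNonAssocSemiring K] {v w : ι → K}
    (h : ∀ i, v i = 0 ∨ w i = 0) : v ⬝ᵥ w = 0 :=
  Finset.sum_eq_zero fun i _ => (h i).elim (mul_eq_zero_of_left · _) (mul_eq_zero_of_right _ ·)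

namespace Matrix.IsSymm

variable [CommRing K] {M : Matrix ι ι K}

theorem dotProduct_mulVec_comm (hM : M.IsSymm) (x y : ι → K) :
    x ⬝ᵥ M *ᵥ y = y ⬝ᵥ M *ᵥ x := by
  rw [dotProduct_mulVec, ← mulVec_transpose, hM.eq, dotProduct_comm]

theorem add_dotProduct_mulVec_add (hM : M.IsSymm) (x y : ι → K) :
    (x + y) ⬝ᵥ M *ᵥ (x + y) = x ⬝ᵥ M *ᵥ x + 2 * (y ⬝ᵥ M *ᵥ x) + y ⬝ᵥ M *ᵥ y := by
  simp only [mulVec_add, add_dotProduct, dotProduct_add, hM.dotProduct_mulVec_comm x y]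
  ring

theorem add_smul_dotProduct_mulVec_add_smul (hM : M.IsSymm) {x d : ι → K}
    (hd : d ⬝ᵥ M *ᵥ (x + d) = 0) (t : K) :
    (x + t • d) ⬝ᵥ M *ᵥ (x + t • d) = x ⬝ᵥ M *ᵥ x + (t ^ 2 - 2 * t) * (d ⬝ᵥ M *ᵥ d) := by
  rw [mulVec_add, dotProduct_add] at hd
  rw [hM.add_dotProduct_mulVec_add, mulVec_smul, smul_dotProduct, dotProduct_smul,
    smul_dotProduct, smul_eq_mul, smul_eq_mul, smul_eq_mul]
  linear_combination (2 * t) * hd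

end Matrix.IsSymm

section OrderedRing

variable [CommRing K] [LinearOrder K] {M : Matrix ι ι K}

theorem eq_zero_of_forall_eq_zero_or_mulVec_eq_zero
    (hneg : ∀ x : ι → K, x ≠ 0 → x ⬝ᵥ M *ᵥ x < 0) {x : ι → K}
    (h : ∀ i, x i = 0 ∨ (M *ᵥ x) i = 0) : x = 0 := by
  by_contra hx
  exact (hneg x hx).ne (dotProduct_eq_zero_of_forall_eq_zero_or h)

theorem dotProduct_mulVec_self_nonpos (hneg : ∀ x : ι → K, x ≠ 0 → x ⬝ᵥ M *ᵥ x < 0)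
    (x : ι → K) : x ⬝ᵥ M *ᵥ x ≤ 0 := by
  rcases eq_or_ne x 0 with rfl | hx
  · simp
  · exact (hneg x hx).le

def IsZariskiDecomposition (M : Matrix ι ι K) (L P N : ι → K) : Prop :=
  L = P + N ∧ (∀ i, 0 ≤ (M *ᵥ P) i) ∧ (∀ i, 0 ≤ N i) ∧ P ⬝ᵥ M *ᵥ N = 0

theorem IsZariskiDecomposition.unique [IsStrictOrderedRing K] (hM : M.IsSymm)
    (hneg : ∀ x : ι → K, x ≠ 0 → x ⬝ᵥ M *ᵥ x < 0) {L P₁ N₁ P₂ N₂ : ι → K}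
    (h₁ : IsZariskiDecomposition M L P₁ N₁) (h₂ : IsZariskiDecomposition M L P₂ N₂) :
    P₁ = P₂ ∧ N₁ = N₂ := by
  obtain ⟨hL₁, hP₁, hN₁, hPN₁⟩ := h₁
  obtain ⟨hL₂, hP₂, hN₂, hPN₂⟩ := h₂
  have hdiff : N₁ - N₂ = P₂ - P₁ := by linear_combination hL₂ - hL₁
  have hcross : (N₁ - N₂) ⬝ᵥ M *ᵥ (N₁ - N₂) = N₁ ⬝ᵥ M *ᵥ P₂ + N₂ ⬝ᵥ M *ᵥ P₁ := by
    rw [hdiff, mulVec_sub, ← hdiff, sub_dotProduct, dotProduct_sub, dotProduct_sub,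
      hM.dotProduct_mulVec_comm N₁ P₁, hM.dotProduct_mulVec_comm N₂ P₂, hPN₁, hPN₂]
    ring
  have hN : N₁ = N₂ := by
    by_contra hne
    have hlt := hneg _ (sub_ne_zero.2 hne)
    have h₁₂ := dotProduct_nonneg_of_nonneg hN₁ hP₂
    have h₂₁ := dotProduct_nonneg_of_nonneg hN₂ hP₁
    linarith
  subst hN
  exact ⟨add_right_cancel (hL₁.symm.trans hL₂), rfl⟩

end OrderedRing

section OrderedField

variable [Field K] [LinearOrder K] {M : Matrix ι ι K}

theorem exists_eq_off_and_mulVec_eq_zero_on (hneg : ∀ x : ι → K, x ≠ 0 → x ⬝ᵥ M *ᵥ x < 0)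
    (s : Finset ι) (b : ι → K) :
    ∃ x : ι → K, (∀ i ∉ s, x i = b i) ∧ ∀ i ∈ s, (M *ᵥ x) i = 0 := by
  classical
  let A : Matrix ι ι K := of fun i j => if i ∈ s then M i j else (1 : Matrix ι ι K) i j
  have hA : ∀ x i, (A *ᵥ x) i = if i ∈ s then (M *ᵥ x) i else x i := by
    intro x i
    by_cases hi : i ∈ s <;> simp [A, hi, mulVec, dotProduct, one_apply]
  have hinj : Function.Injective A.mulVecLin := by
    refine (injective_iff_map_eq_zero _).2 fun x hx => ?_
    refine eq_zero_of_forall_eq_zero_or_mulVec_eq_zero hneg fun i => ?_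
    have hxi : (if i ∈ s then (M *ᵥ x) i else x i) = 0 := by
      rw [← hA, ← mulVecLin_apply, hx, Pi.zero_apply]
    split_ifs at hxi
    exacts [Or.inr hxi, Or.inl hxi]
  obtain ⟨x, hx⟩ := LinearMap.injective_iff_surjective.1 hinj fun i => if i ∈ s then 0 else b i
  refine ⟨x, fun i hi => ?_, fun i hi => ?_⟩ <;>
    simpa [hi] using (hA x i).symm.trans (congrFun hx i)

/-- The candidates for the nef part of the Zariski decomposition of `L`: on each face of the
region `{P ≤ L}`, the critical point of `P ↦ P ⬝ᵥ M *ᵥ P`. -/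
def IsComplementary (M : Matrix ι ι K) (L P : ι → K) : Prop :=
  ∀ i, P i = L i ∨ (M *ᵥ P) i = 0

theorem setOf_isComplementary_finite (hneg : ∀ x : ι → K, x ≠ 0 → x ⬝ᵥ M *ᵥ x < 0)
    (L : ι → K) : {P | IsComplementary M L P}.Finite := by
  refine Set.Finite.of_finite_image (f := fun P => {i | P i ≠ L i}) (Set.toFinite _) ?_
  intro P hP P' hP' hsame
  rw [← sub_eq_zero]
  refine eq_zero_of_forall_eq_zero_or_mulVec_eq_zero hneg fun i => ?_
  have hfree : P i ≠ L i ↔ P' i ≠ L i := Set.ext_iff.1 hsame i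
  by_cases hPi : P i = L i
  · exact Or.inl (by rw [Pi.sub_apply, hPi, not_not.1 (hfree.not.1 (not_not.2 hPi)), sub_self])
  · right
    rw [mulVec_sub, Pi.sub_apply, (hP i).resolve_left hPi, (hP' i).resolve_left (hfree.1 hPi),
      sub_self]

variable [IsStrictOrderedRing K]

theorem dotProduct_mulVec_self_le_add_smul_sub (hM : M.IsSymm)
    (hneg : ∀ x : ι → K, x ≠ 0 → x ⬝ᵥ M *ᵥ x < 0) {s : Finset ι} {P F : ι → K}
    (hPF : ∀ i ∉ s, P i = F i) (hF : ∀ i ∈ s, (M *ᵥ F) i = 0) {t : K} (ht₀ : 0 ≤ t)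
    (ht₂ : t ≤ 2) : P ⬝ᵥ M *ᵥ P ≤ (P + t • (F - P)) ⬝ᵥ M *ᵥ (P + t • (F - P)) := by
  have hd : (F - P) ⬝ᵥ M *ᵥ (P + (F - P)) = 0 := by
    rw [add_sub_cancel]
    refine dotProduct_eq_zero_of_forall_eq_zero_or fun i => ?_
    by_cases hi : i ∈ s
    · exact Or.inr (hF i hi)
    · exact Or.inl (sub_eq_zero.2 (hPF i hi).symm)
  rw [hM.add_smul_dotProduct_mulVec_add_smul hd]
  exact le_add_of_nonneg_right <| mul_nonneg_of_nonpos_of_nonpos (by nlinarith)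
    (dotProduct_mulVec_self_nonpos hneg _)

/-- Moving from `P` towards the critical point `F` of its face until the region `{P ≤ L}` is
left shrinks the face. -/
theorem exists_le_dotProduct_mulVec_le_of_not_le [DecidableEq ι] (hM : M.IsSymm)
    (hneg : ∀ x : ι → K, x ≠ 0 → x ⬝ᵥ M *ᵥ x < 0) {s : Finset ι} {L P F : ι → K}
    (hPL : P ≤ L) (hP : ∀ i ∉ s, P i = L i) (hF : ∀ i ∉ s, F i = L i)
    (hMF : ∀ i ∈ s, (M *ᵥ F) i = 0) (hFL : ¬ F ≤ L) :
    ∃ j ∈ s, ∃ P' ≤ L, (∀ i ∉ s.erase j, P' i = L i) ∧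
      P ⬝ᵥ M *ᵥ P ≤ P' ⬝ᵥ M *ᵥ P' := by
  set T := Finset.univ.filter fun i => L i < F i
  have hT : T.Nonempty := by
    obtain ⟨i, hi⟩ : ∃ i, L i < F i := by simpa [Pi.le_def] using hFL
    exact ⟨i, Finset.mem_filter.2 ⟨Finset.mem_univ i, hi⟩⟩
  have hgap : ∀ i ∈ T, 0 < F i - P i := fun i hi => by
    have := (Finset.mem_filter.1 hi).2
    linarith [hPL i]
  let r i := (L i - P i) / (F i - P i)
  obtain ⟨j, hjT, hjmin⟩ := T.exists_min_image r hT
  have hr₀ : 0 ≤ r j := div_nonneg (sub_nonneg.2 (hPL j)) (hgap j hjT).le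
  have hr₁ : r j ≤ 1 := by
    have := (Finset.mem_filter.1 hjT).2
    exact div_le_one_of_le₀ (by linarith) (hgap j hjT).le
  have hjs : j ∈ s := by
    by_contra hj
    exact (Finset.mem_filter.1 hjT).2.ne' (hF j hj)
  refine ⟨j, hjs, P + r j • (F - P), fun i => ?_, fun i hi => ?_,
    dotProduct_mulVec_self_le_add_smul_sub hM hneg (fun i hi => (hP i hi).trans (hF i hi).symm)
      hMF hr₀ (by linarith)⟩
  · simp only [Pi.add_apply, Pi.smul_apply, Pi.sub_apply, smul_eq_mul]
    by_cases hiT : i ∈ T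
    · have := (le_div_iff₀ (hgap i hiT)).1 (hjmin i hiT)
      linarith
    · have : F i ≤ L i := by simpa [T] using hiT
      nlinarith [hPL i]
  · simp only [Pi.add_apply, Pi.smul_apply, Pi.sub_apply, smul_eq_mul]
    rcases eq_or_ne i j with rfl | hij
    · simp only [r]
      rw [div_mul_cancel₀ _ (hgap i hjT).ne']
      ring
    · have hi : i ∉ s := fun h => hi (Finset.mem_erase.2 ⟨hij, h⟩)
      rw [hP i hi, hF i hi]
      ring

theorem exists_isComplementary_dotProduct_mulVec_le (hM : M.IsSymm)
    (hneg : ∀ x : ι → K, x ≠ 0 → x ⬝ᵥ M *ᵥ x < 0) {L P : ι → K} (hPL : P ≤ L) :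
    ∃ P' ≤ L, IsComplementary M L P' ∧ P ⬝ᵥ M *ᵥ P ≤ P' ⬝ᵥ M *ᵥ P' := by
  classical
  suffices h : ∀ s : Finset ι, ∀ P ≤ L, (∀ i ∉ s, P i = L i) →
      ∃ P' ≤ L, IsComplementary M L P' ∧ P ⬝ᵥ M *ᵥ P ≤ P' ⬝ᵥ M *ᵥ P' from
    h Finset.univ P hPL fun i hi => absurd (Finset.mem_univ i) hi
  intro s
  induction s using Finset.strongInduction with
  | H s ih =>
    intro P hPL hP
    obtain ⟨F, hF, hMF⟩ := exists_eq_off_and_mulVec_eq_zero_on hneg s L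
    by_cases hFL : F ≤ L
    · refine ⟨F, hFL, fun i => ?_, ?_⟩
      · by_cases hi : i ∈ s
        · exact Or.inr (hMF i hi)
        · exact Or.inl (hF i hi)
      · simpa using dotProduct_mulVec_self_le_add_smul_sub hM hneg
          (fun i hi => (hP i hi).trans (hF i hi).symm) hMF zero_le_one one_le_two
    · obtain ⟨j, hj, P₁, hP₁L, hP₁, hle₁⟩ :=
        exists_le_dotProduct_mulVec_le_of_not_le hM hneg hPL hP hF hMF hFL
      obtain ⟨P₂, hP₂L, hP₂, hle₂⟩ := ih _ (Finset.erase_ssubset hj) P₁ hP₁L hP₁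
      exact ⟨P₂, hP₂L, hP₂, hle₁.trans hle₂⟩

theorem exists_le_dotProduct_mulVec_lt_of_mulVec_neg [DecidableEq ι] (hM : M.IsSymm)
    (hneg : ∀ x : ι → K, x ≠ 0 → x ⬝ᵥ M *ᵥ x < 0) {P : ι → K} {i : ι}
    (hi : (M *ᵥ P) i < 0) : ∃ P' ≤ P, P ⬝ᵥ M *ᵥ P < P' ⬝ᵥ M *ᵥ P' := by
  have hii : M i i < 0 := by
    simpa [mulVec_single] using hneg (Pi.single i 1) (by simp)
  set a := (M *ᵥ P) i
  have hc : -a / M i i < 0 := div_neg_of_pos_of_neg (neg_pos.2 hi) hii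
  refine ⟨P + Pi.single i (-a / M i i), add_le_of_nonpos_right (Pi.single_nonpos.2 hc.le), ?_⟩
  have hgain :
      2 * (-a / M i i * a) + -a / M i i * (M i i * (-a / M i i)) = -(a ^ 2 / M i i) := by
    field_simp
    ring
  have ha : a ^ 2 / M i i < 0 := div_neg_of_pos_of_neg (by nlinarith) hii
  rw [hM.add_dotProduct_mulVec_add, single_dotProduct, single_dotProduct, mulVec_single]
  simp only [Pi.smul_apply, col_apply, MulOpposite.smul_eq_mul_unop, MulOpposite.unop_op]
  linarith

theorem exists_le_isComplementary_nef (hM : M.IsSymm)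
    (hneg : ∀ x : ι → K, x ≠ 0 → x ⬝ᵥ M *ᵥ x < 0) (L : ι → K) :
    ∃ P ≤ L, IsComplementary M L P ∧ ∀ i, 0 ≤ (M *ᵥ P) i := by
  classical
  obtain ⟨P, ⟨hPL, hP⟩, hmax⟩ := Set.exists_max_image {P | P ≤ L ∧ IsComplementary M L P}
    (fun P => P ⬝ᵥ M *ᵥ P) ((setOf_isComplementary_finite hneg L).subset fun _ h => h.2)
    ⟨L, le_rfl, fun _ => Or.inl rfl⟩
  refine ⟨P, hPL, hP, fun i => not_lt.1 fun hi => ?_⟩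
  obtain ⟨P₁, hP₁P, hlt⟩ := exists_le_dotProduct_mulVec_lt_of_mulVec_neg hM hneg hi
  obtain ⟨P₂, hP₂L, hP₂, hle⟩ :=
    exists_isComplementary_dotProduct_mulVec_le hM hneg (hP₁P.trans hPL)
  exact (hlt.trans_le hle).not_ge (hmax P₂ ⟨hP₂L, hP₂⟩)

theorem exists_isZariskiDecomposition (hM : M.IsSymm)
    (hneg : ∀ x : ι → K, x ≠ 0 → x ⬝ᵥ M *ᵥ x < 0) (L : ι → K) :
    ∃ P N, IsZariskiDecomposition M L P N := by
  obtain ⟨P, hPL, hP, hnef⟩ := exists_le_isComplementary_nef hM hneg L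
  refine ⟨P, L - P, (add_sub_cancel P L).symm, hnef, fun i => sub_nonneg.2 (hPL i), ?_⟩
  rw [hM.dotProduct_mulVec_comm]
  exact dotProduct_eq_zero_of_forall_eq_zero_or fun i =>
    (hP i).imp (fun h => sub_eq_zero.2 h.symm) id

end OrderedField

/-- **Zariski decomposition.** For a symmetric negative definite `n × n` rational
matrix `M`, every vector `L ∈ ℚⁿ` has a unique decomposition `L = P + N` where
`P` is nef (`(M P)ᵢ ≥ 0` for all `i`), `N` is effective (all coordinates `≥ 0`),
and `P · N = Pᵀ M N = 0`. -/
theorem zariski_decomposition_exists_unique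
    (n : ℕ) (M : Matrix (Fin n) (Fin n) ℚ)
    (hsym : M.IsSymm)
    (hneg : ∀ x : Fin n → ℚ, x ≠ 0 → x ⬝ᵥ M.mulVec x < 0)
    (L : Fin n → ℚ) :
    ∃! PN : (Fin n → ℚ) × (Fin n → ℚ),
      L = PN.1 + PN.2 ∧
      (∀ i, 0 ≤ M.mulVec PN.1 i) ∧
      (∀ i, 0 ≤ PN.2 i) ∧
      PN.1 ⬝ᵥ M.mulVec PN.2 = 0 := by
  obtain ⟨P, N, h⟩ := exists_isZariskiDecomposition hsym hneg L
  refine ⟨(P, N), h, fun PN h' => ?_⟩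
  obtain ⟨hP, hN⟩ := IsZariskiDecomposition.unique hsym hneg
    (show IsZariskiDecomposition M L PN.1 PN.2 from h') h
  exact Prod.ext hP hN
end

section
/- Let M be a symmetric negative definite n×n rational matrix, and let L, L' ∈ ℚⁿ satisfy L' = L − D for some effective vector D. If L = P + N and L' = P' + N' are the Zariski decompositions of L and L', then −P·P ≤ −P'·P'. -/
open Matrix

private lemma dot_symm {n : ℕ} (M : Matrix (Fin n) (Fin n) ℚ) (hsym : M.IsSymm)
    (x y : Fin n → ℚ) : x ⬝ᵥ M.mulVec y = y ⬝ᵥ M.mulVec x := by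
  rw [Matrix.dotProduct_mulVec, ← Matrix.mulVec_transpose, hsym.eq, dotProduct_comm]

private lemma nef_dot_eff {n : ℕ} (M : Matrix (Fin n) (Fin n) ℚ) (hsym : M.IsSymm)
    (Q E : Fin n → ℚ) (hQ : ∀ i, 0 ≤ M.mulVec Q i) (hE : ∀ i, 0 ≤ E i) :
    0 ≤ Q ⬝ᵥ M.mulVec E := by
  rw [dot_symm M hsym]
  exact Finset.sum_nonneg fun i _ => mul_nonneg (hE i) (hQ i)

/-- If `L' = L - D` with `D` effective, and `L = P + N`, `L' = P' + N'` are
Zariski decompositions with respect to a symmetric negative definite matrix `M`,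
then `-P·P ≤ -P'·P'`. -/
theorem neg_self_intersection_mono
    (n : ℕ) (M : Matrix (Fin n) (Fin n) ℚ)
    (hsym : M.IsSymm)
    (hneg : ∀ x : Fin n → ℚ, x ≠ 0 → x ⬝ᵥ M.mulVec x < 0)
    (L L' D P N P' N' : Fin n → ℚ)
    (hD : ∀ i, 0 ≤ D i)
    (hL' : L' = L - D)
    (hdec : L = P + N)
    (hPnef : ∀ i, 0 ≤ M.mulVec P i)
    (hNeff : ∀ i, 0 ≤ N i)
    (hperp : P ⬝ᵥ M.mulVec N = 0)
    (hdec' : L' = P' + N')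
    (hPnef' : ∀ i, 0 ≤ M.mulVec P' i)
    (hNeff' : ∀ i, 0 ≤ N' i)
    (hperp' : P' ⬝ᵥ M.mulVec N' = 0) :
    -(P ⬝ᵥ M.mulVec P) ≤ -(P' ⬝ᵥ M.mulVec P') := by
  -- P = L - N = L' + D - N = P' + N' + D - N
  have hPeq : P = P' + N' + D - N := by
    have : L = P' + N' + D := by rw [← hdec', hL']; ring
    rw [hdec] at this
    funext i
    have := congrFun this i
    simp only [Pi.add_apply, Pi.sub_apply] at *
    linarith
  -- P·P ≥ P·P'
  have h1 : P ⬝ᵥ M.mulVec P' ≤ P ⬝ᵥ M.mulVec P := by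
    have hexp : P ⬝ᵥ M.mulVec P
        = P ⬝ᵥ M.mulVec P' + P ⬝ᵥ M.mulVec N' + P ⬝ᵥ M.mulVec D - P ⬝ᵥ M.mulVec N := by
      rw [hPeq]
      simp only [Matrix.mulVec_add, Matrix.mulVec_sub, dotProduct_add,
        dotProduct_sub, add_dotProduct, sub_dotProduct]
    have h2 : 0 ≤ P ⬝ᵥ M.mulVec N' := nef_dot_eff M hsym P N' hPnef hNeff'
    have h3 : 0 ≤ P ⬝ᵥ M.mulVec D := nef_dot_eff M hsym P D hPnef hD
    rw [hexp, hperp]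
    linarith
  -- negative semidefiniteness of P - P'
  have hns : (P - P') ⬝ᵥ M.mulVec (P - P') ≤ 0 := by
    by_cases h : P - P' = 0
    · simp [h]
    · exact le_of_lt (hneg _ h)
  have hex2 : (P - P') ⬝ᵥ M.mulVec (P - P')
      = P ⬝ᵥ M.mulVec P - 2 * (P ⬝ᵥ M.mulVec P') + P' ⬝ᵥ M.mulVec P' := by
    have hs := dot_symm M hsym P' P
    simp [Matrix.mulVec_sub, dotProduct_sub, sub_dotProduct]
    linarith
  linarith
end

section
/- Let M be a symmetric negative definite n×n rational matrix, let L ∈ ℚⁿ have Zariski decomposition L = P + N, and let S = { i : Nᵢ ≠ 0 } be the support of N. Then N is the unique vector supported in S that satisfies (L − N)·eᵢ = 0 for every i ∈ S: if N' ∈ ℚⁿ satisfies N'ᵢ = 0 for all i ∉ S and (L − N')·eᵢ = 0 for all i ∈ S, then N' = N (here eᵢ denotes the i-th standard basis vector). -/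
open Matrix

/-- The negative part `N` of a Zariski decomposition `L = P + N` is the unique
vector supported in `S = {i : Nᵢ ≠ 0}` satisfying `(L - N)·eᵢ = 0` for all `i ∈ S`. -/
theorem zariski_negative_part_unique_on_support
    (n : ℕ) (M : Matrix (Fin n) (Fin n) ℚ)
    (hsym : M.IsSymm)
    (hneg : ∀ x : Fin n → ℚ, x ≠ 0 → x ⬝ᵥ M.mulVec x < 0)
    (L P N : Fin n → ℚ)
    (hdec : L = P + N)
    (hPnef : ∀ i, 0 ≤ M.mulVec P i)
    (hNeff : ∀ i, 0 ≤ N i)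
    (hperp : P ⬝ᵥ M.mulVec N = 0)
    (N' : Fin n → ℚ)
    (hsupp : ∀ i, N i = 0 → N' i = 0)
    (hdot : ∀ i, N i ≠ 0 → (L - N') ⬝ᵥ M.mulVec (Pi.single i 1) = 0) :
    N' = N := by
  have hMsym : ∀ i j, M j i = M i j := fun i j => hsym.apply i j
  set D : Fin n → ℚ := fun i => N' i - N i with hDdef
  -- D vanishes off the support of N
  have hD0 : ∀ i, N i = 0 → D i = 0 := by
    intro i h; simp [hDdef, hsupp i h, h]
  -- Step 1 : (M P) i = 0 on the support of N
  have hsum0 : ∑ j, N j * M.mulVec P j = 0 := by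
    have : N ⬝ᵥ M.mulVec P = 0 := by
      rw [← hperp]
      simp only [dotProduct, mulVec, Finset.mul_sum]
      rw [Finset.sum_comm]
      apply Finset.sum_congr rfl; intro j _
      apply Finset.sum_congr rfl; intro k _
      rw [hMsym j k]; ring
    simpa [dotProduct] using this
  have hMP : ∀ i, N i ≠ 0 → M.mulVec P i = 0 := by
    intro i hi
    have hnn : ∀ j ∈ Finset.univ, (0:ℚ) ≤ N j * M.mulVec P j :=
      fun j _ => mul_nonneg (hNeff j) (hPnef j)
    have := (Finset.sum_eq_zero_iff_of_nonneg hnn).1 hsum0 i (Finset.mem_univ i)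
    exact (mul_eq_zero.1 this).resolve_left hi
  -- Step 2 : D ⬝ᵥ M eᵢ = 0 on the support of N
  have hf : ∀ i, N i ≠ 0 → ∑ j, D j * M j i = 0 := by
    intro i hi
    have h1 : (L - N') ⬝ᵥ M.mulVec (Pi.single i 1) = 0 := hdot i hi
    have hLN : ∀ j, L j - N' j = P j - D j := by
      intro j; simp [hDdef, hdec]; ring
    have h2 : ∑ j, (P j - D j) * M j i = 0 := by
      have := h1
      simp only [dotProduct, mulVec, Pi.sub_apply] at this
      have hsingle : ∀ j, (∑ k, M j k * (Pi.single i 1 : Fin n → ℚ) k) = M j i := by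
        intro j
        rw [Finset.sum_eq_single i]
        · simp
        · intro k _ hk; simp [Pi.single_apply, hk]
        · simp
      simp only [hsingle, hLN] at this
      exact this
    have hP : ∑ j, P j * M j i = M.mulVec P i := by
      simp only [mulVec, dotProduct]
      apply Finset.sum_congr rfl; intro j _; rw [hMsym i j]; ring
    have := hMP i hi
    have hexp : ∑ j, (P j - D j) * M j i
        = (∑ j, P j * M j i) - ∑ j, D j * M j i := by
      rw [← Finset.sum_sub_distrib]; apply Finset.sum_congr rfl; intros; ring
    rw [hexp, hP, hMP i hi] at h2
    linarith
  -- Step 3 : D ⬝ᵥ M D = 0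
  have hDD : D ⬝ᵥ M.mulVec D = 0 := by
    have : D ⬝ᵥ M.mulVec D = ∑ i, (∑ j, D j * M j i) * D i := by
      simp only [dotProduct, mulVec, Finset.mul_sum]
      rw [Finset.sum_comm]
      apply Finset.sum_congr rfl; intro i _
      rw [Finset.sum_mul]
      apply Finset.sum_congr rfl; intro j _; ring
    rw [this]
    apply Finset.sum_eq_zero
    intro i _
    by_cases hi : N i = 0
    · rw [hD0 i hi]; ring
    · rw [hf i hi]; ring
  -- Step 4 : D = 0
  have hDzero : D = 0 := by
    by_contra h
    have := hneg D h
    rw [hDD] at this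
    exact lt_irrefl 0 this
  funext i
  have : D i = 0 := congrFun hDzero i
  simpa [hDdef, sub_eq_zero] using this
end

section
/- Fix a positive integer k and give the set of k-tuples of positive integers the weight function W(n₁,…,n_k) = ∑_{i=1}^k 1/nᵢ ∈ ℚ. Then the ascending chain condition holds: every nonempty subset Z of (ℕ₊)^k contains an element of maximal weight, i.e. there exists α ∈ Z such that W(β) ≤ W(α) for all β ∈ Z. -/
/-!
The reciprocals `1/n` of positive integers contain no strictly increasing infinite sequence, so
they form a partially well-ordered set for the reversed order on `ℚ`. Pointwise sums of finitely
many partially well-ordered sets are again partially well-ordered, so the same holds for the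
weights of `k`-tuples; in particular every nonempty set of weights attains its maximum.
-/

open Set Pointwise

theorem Set.IsPWO.range_finsetSum {ι β α : Type*} [AddCommMonoid α] [PartialOrder α]
    [IsOrderedCancelAddMonoid α] {f : β → α} (hf : (range f).IsPWO) (s : Finset ι) :
    (range fun x : ι → β => ∑ i ∈ s, f (x i)).IsPWO := by
  classical
  induction s using Finset.induction with
  | empty => simpa using (subsingleton_of_forall_eq (0 : α) (by simp)).isPWO
  | insert a s ha ih =>
    refine (hf.add ih).mono ?_
    rintro _ ⟨x, rfl⟩
    simp only [Finset.sum_insert ha]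
    exact add_mem_add ⟨x a, rfl⟩ ⟨x, rfl⟩

theorem isPWO_range_toDual_one_div_pnat :
    (range fun n : ℕ+ => OrderDual.toDual ((1 : ℚ) / (n : ℕ))).IsPWO := by
  rw [← image_univ]
  refine (isPWO_of_wellQuasiOrderedLE _).image_of_monotone fun m n hmn => ?_
  exact OrderDual.toDual_le_toDual.mpr
    (one_div_le_one_div_of_le (by positivity) (by exact_mod_cast hmn))

theorem acc_for_reciprocal_weight_general
    (k : ℕ) (Z : Set (Fin k → ℕ+)) (hZ : Z.Nonempty) :
    ∃ α ∈ Z, ∀ β ∈ Z,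
      (∑ i, (1 : ℚ) / ((β i : ℕ) : ℚ)) ≤ ∑ i, (1 : ℚ) / ((α i : ℕ) : ℚ) := by
  set W : (Fin k → ℕ+) → ℚᵒᵈ := fun α => ∑ i, OrderDual.toDual ((1 : ℚ) / (α i : ℕ))
  have hWF : (W '' Z).IsWF :=
    ((isPWO_range_toDual_one_div_pnat.range_finsetSum Finset.univ).mono
      (image_subset_range W Z)).isWF
  obtain ⟨α, hαZ, hα⟩ := hWF.min_mem (hZ.image W)
  exact ⟨α, hαZ, fun β hβ =>
    (hα ▸ hWF.min_le (hZ.image W) (mem_image_of_mem W hβ) : W α ≤ W β)⟩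

/-- ACC for the weight function `W(n₁,…,n_k) = ∑ 1/nᵢ` on `k`-tuples of positive
integers: every nonempty subset contains an element of maximal weight. -/
theorem acc_for_reciprocal_weight
    (k : ℕ) (hk : 0 < k) (Z : Set (Fin k → ℕ+)) (hZ : Z.Nonempty) :
    ∃ α ∈ Z, ∀ β ∈ Z,
      (∑ i, (1 : ℚ) / ((β i : ℕ) : ℚ)) ≤ ∑ i, (1 : ℚ) / ((α i : ℕ) : ℚ) :=
  acc_for_reciprocal_weight_general k Z hZ
end

section
/- Fix a natural number u and let S = { x ∈ ℚ : x > 0 and x = (u − 2) − ∑_{i=1}^u 1/kᵢ for some positive integers k₁,…,k_u }. Then S satisfies the descending chain condition: there is no strictly decreasing sequence x₀ > x₁ > x₂ > … of elements of S. -/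
/-!
The value `(u - 2) - ∑ 1/kᵢ` is monotone in the tuple `k` for the componentwise order, and by
Dickson's lemma `Fin u → ℕ+` is well-quasi-ordered: every sequence of tuples has two terms
`k m ≤ k n` with `m < n`, so the corresponding values cannot strictly decrease.
-/

theorem Monotone.not_strictAnti_comp {α β : Type*} [Preorder α] [WellQuasiOrderedLE α]
    [Preorder β] {g : α → β} (hg : Monotone g) (a : ℕ → α) : ¬ StrictAnti (g ∘ a) := by
  intro hanti
  obtain ⟨m, n, hmn, hle⟩ := wellQuasiOrdered_le a
  exact (hanti hmn).not_ge (hg hle)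

theorem monotone_sub_sum_one_div {ι : Type*} [Fintype ι] (c : ℚ) :
    Monotone fun k : ι → ℕ+ => c - ∑ i, (1 : ℚ) / ((k i : ℕ) : ℚ) := by
  intro k l hkl
  have hsum : ∑ i, (1 : ℚ) / ((l i : ℕ) : ℚ) ≤ ∑ i, (1 : ℚ) / ((k i : ℕ) : ℚ) :=
    Finset.sum_le_sum fun i _ =>
      one_div_le_one_div_of_le (by exact_mod_cast (k i).pos) (by exact_mod_cast hkl i)
  linarith

/-- The set of positive rationals of the form `(u-2) - ∑_{i=1}^u 1/kᵢ`, for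
positive integers `kᵢ`, satisfies the descending chain condition. -/
theorem dcc_for_chi_values (u : ℕ) :
    ¬ ∃ f : ℕ → ℚ,
      (∀ j, 0 < f j ∧ ∃ k : Fin u → ℕ+,
        f j = ((u : ℚ) - 2) - ∑ i, (1 : ℚ) / ((k i : ℕ) : ℚ)) ∧
      (∀ j, f (j + 1) < f j) := by
  rintro ⟨f, hf, hdec⟩
  choose _ k hk using hf
  apply (monotone_sub_sum_one_div ((u : ℚ) - 2)).not_strictAnti_comp k
  refine strictAnti_nat_of_succ_lt fun j => ?_
  simpa only [Function.comp_apply, ← hk] using hdec j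
end

section
/- Let u be a natural number and k₁,…,k_u integers with kᵢ ≥ 2 for all i. If χ = −2 + ∑_{i=1}^u (1 − 1/kᵢ) > 0, then χ ≥ 1/42. -/
lemma invZ (m k : ℤ) (hm : 0 < m) (h : m ≤ k) : (1:ℚ)/k ≤ 1/m := by
  have h1 : (0:ℚ) < m := by exact_mod_cast hm
  have h2 : (m:ℚ) ≤ k := by exact_mod_cast h
  exact one_div_le_one_div_of_le h1 h2

lemma invZ' (m k : ℤ) (hk : 0 < k) (h : (1:ℚ)/k < 1/m) : m + 1 ≤ k := by
  by_contra hmk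
  have hkm : k ≤ m := by omega
  have := invZ k m hk hkm
  linarith

lemma key_sorted (a b c : ℤ) (ha : 2 ≤ a) (hab : a ≤ b) (hbc : b ≤ c)
    (h : 1/(a:ℚ) + 1/b + 1/c < 1) : 1/(a:ℚ) + 1/b + 1/c ≤ 41/42 := by
  have hb : 2 ≤ b := le_trans ha hab
  have hc : 2 ≤ c := le_trans hb hbc
  have hcpos : (0:ℚ) < 1/c := by
    have : (0:ℚ) < (c:ℚ) := by exact_mod_cast (by omega : (0:ℤ) < c)
    positivity
  rcases ha.eq_or_lt with ha2 | ha3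
  · -- a = 2
    have ha2' : a = 2 := ha2.symm
    subst ha2'
    have h2 : (1:ℚ)/((2:ℤ):ℚ) = 1/2 := by norm_num
    rw [h2] at h ⊢
    -- 1/b + 1/c < 1/2
    have hb' : (1:ℚ)/b < 1/2 := by linarith
    have hb3 : 3 ≤ b := by
      have := invZ' 2 b (by omega) (by norm_num at hb' ⊢; exact_mod_cast hb')
      omega
    rcases hb3.eq_or_lt with hb3' | hb4
    · -- b = 3
      have hb3'' : b = 3 := hb3'.symm
      subst hb3''
      have h3 : (1:ℚ)/((3:ℤ):ℚ) = 1/3 := by norm_num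
      rw [h3] at h ⊢
      have hcc : (1:ℚ)/c < 1/6 := by linarith
      have hc7 : 7 ≤ c := by
        have := invZ' 6 c (by omega) (by norm_num at hcc ⊢; exact_mod_cast hcc)
        omega
      have := invZ 7 c (by norm_num) hc7
      push_cast at this
      linarith
    · -- b ≥ 4
      rcases (by omega : b = 4 ∨ 5 ≤ b) with hb4' | hb5
      · subst hb4'
        have h4 : (1:ℚ)/((4:ℤ):ℚ) = 1/4 := by norm_num
        rw [h4] at h ⊢
        have hcc : (1:ℚ)/c < 1/4 := by linarith
        have hc5 : 5 ≤ c := by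
          have := invZ' 4 c (by omega) (by norm_num at hcc ⊢; exact_mod_cast hcc)
          omega
        have := invZ 5 c (by norm_num) hc5
        push_cast at this
        linarith
      · have h5b := invZ 5 b (by norm_num) hb5
        have h5c := invZ 5 c (by norm_num) (le_trans hb5 hbc)
        push_cast at h5b h5c
        linarith
  · -- a ≥ 3
    have ha3' : 3 ≤ a := ha3
    have h3a := invZ 3 a (by norm_num) ha3'
    have h3b := invZ 3 b (by norm_num) (le_trans ha3' hab)
    -- 1/c ≤ 1/a and 1/c ≤ 1/b
    have hca := invZ a c (by omega) (le_trans hab hbc)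
    have hcb := invZ b c (by omega) hbc
    have hcc : (1:ℚ)/c < 1/3 := by linarith
    have hc4 : 4 ≤ c := by
      have := invZ' 3 c (by omega) (by norm_num at hcc ⊢; exact_mod_cast hcc)
      omega
    have h4c := invZ 4 c (by norm_num) hc4
    push_cast at h3a h3b h4c
    linarith

lemma key3 (a b c : ℤ) (ha : 2 ≤ a) (hb : 2 ≤ b) (hc : 2 ≤ c)
    (h : 1/(a:ℚ) + 1/b + 1/c < 1) : 1/(a:ℚ) + 1/b + 1/c ≤ 41/42 := by
  rcases le_total a b with h1 | h1 <;> rcases le_total b c with h2 | h2 <;>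
    rcases le_total a c with h3 | h3
  · linarith [key_sorted a b c ha h1 h2 (by linarith)]
  · linarith [key_sorted a b c ha h1 h2 (by linarith)]
  · linarith [key_sorted a c b ha h3 h2 (by linarith)]
  · linarith [key_sorted c a b hc h3 h1 (by linarith)]
  · linarith [key_sorted b a c hb h1 h3 (by linarith)]
  · linarith [key_sorted b c a hb h2 h3 (by linarith)]
  · linarith [key_sorted c b a hc h2 h1 (by linarith)]
  · linarith [key_sorted c b a hc h2 h1 (by linarith)]

lemma key4 (a b c d : ℤ) (ha : 2 ≤ a) (hb : 2 ≤ b) (hc : 2 ≤ c) (hd : 2 ≤ d)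
    (h : 1/(a:ℚ) + 1/b + 1/c + 1/d < 2) :
    1/(a:ℚ) + 1/b + 1/c + 1/d ≤ 2 - 1/42 := by
  have D : ∀ x : ℤ, 2 ≤ x → (1:ℚ)/x = 1/2 ∨ (1:ℚ)/x ≤ 1/3 := by
    intro x hx
    rcases hx.eq_or_lt with h' | h'
    · left; rw [← h']; norm_num
    · right
      have := invZ 3 x (by norm_num) (by omega)
      push_cast at this; exact this
  rcases D a ha with h1 | h1 <;> rcases D b hb with h2 | h2 <;>
    rcases D c hc with h3 | h3 <;> rcases D d hd with h4 | h4 <;> linarith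

/-- If `χ = -2 + ∑ (1 - 1/kᵢ) > 0` with all `kᵢ ≥ 2`, then `χ ≥ 1/42`. -/
theorem chi_pos_ge_one_div_42
    (u : ℕ) (k : Fin u → ℤ) (hk : ∀ i, 2 ≤ k i)
    (hpos : 0 < -2 + ∑ i, (1 - 1 / ((k i : ℚ)))) :
    (1 : ℚ) / 42 ≤ -2 + ∑ i, (1 - 1 / ((k i : ℚ))) := by
  have hinv : ∀ i, (0:ℚ) < 1 / (k i : ℚ) ∧ (1:ℚ) / (k i : ℚ) ≤ 1/2 := by
    intro i
    have h2 : (0:ℚ) < (k i : ℚ) := by exact_mod_cast (by linarith [hk i] : (0:ℤ) < k i)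
    constructor
    · positivity
    · have := invZ 2 (k i) (by norm_num) (hk i)
      push_cast at this; exact this
  rcases Nat.lt_or_ge u 5 with hu | hu
  · interval_cases u
    · simp at hpos
      norm_num at hpos
    · rw [Fin.sum_univ_one] at hpos
      have := (hinv 0).1
      linarith
    · rw [Fin.sum_univ_two] at hpos
      have := (hinv 0).1
      have := (hinv 1).1
      linarith
    · rw [Fin.sum_univ_three] at hpos ⊢
      have h := key3 (k 0) (k 1) (k 2) (hk 0) (hk 1) (hk 2) (by linarith)
      linarith
    · rw [Fin.sum_univ_four] at hpos ⊢
      have h := key4 (k 0) (k 1) (k 2) (k 3) (hk 0) (hk 1) (hk 2) (hk 3) (by linarith)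
      linarith
  · -- u ≥ 5 : each term ≥ 1/2
    have hterm : ∀ i ∈ Finset.univ, (1:ℚ)/2 ≤ 1 - 1 / (k i : ℚ) := by
      intro i _
      have := (hinv i).2
      linarith
    have hsum := Finset.card_nsmul_le_sum Finset.univ _ _ hterm
    rw [Finset.card_univ, Fintype.card_fin, nsmul_eq_mul] at hsum
    have hu' : (5:ℚ) ≤ u := by exact_mod_cast hu
    linarith
end

section
/- Let a, b, c be integers with 2 ≤ a ≤ b ≤ c. If 1 − 1/a − 1/b − 1/c > 0, then 1 − 1/a − 1/b − 1/c ≥ 1/42; moreover equality 1 − 1/a − 1/b − 1/c = 1/42 holds if and only if (a, b, c) = (2, 3, 7). -/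
private lemma one_div_le' {x y : ℚ} (hx : 0 < x) (h : x ≤ y) : 1/y ≤ 1/x :=
  one_div_le_one_div_of_le hx h

/-- For integers `2 ≤ a ≤ b ≤ c`: if `1 - 1/a - 1/b - 1/c > 0` then it is at
least `1/42`, with equality exactly for `(a,b,c) = (2,3,7)`. -/
theorem one_sub_reciprocals_min
    (a b c : ℤ) (ha : 2 ≤ a) (hab : a ≤ b) (hbc : b ≤ c) :
    (0 < 1 - 1 / (a : ℚ) - 1 / (b : ℚ) - 1 / (c : ℚ) →
      (1 : ℚ) / 42 ≤ 1 - 1 / (a : ℚ) - 1 / (b : ℚ) - 1 / (c : ℚ)) ∧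
    (1 - 1 / (a : ℚ) - 1 / (b : ℚ) - 1 / (c : ℚ) = 1 / 42 ↔
      (a, b, c) = (2, 3, 7)) := by
  have hb2 : (2:ℤ) ≤ b := le_trans ha hab
  have hc2 : (2:ℤ) ≤ c := le_trans hb2 hbc
  have hc0Q : (0:ℚ) < (c:ℚ) := by exact_mod_cast (by omega : (0:ℤ) < c)
  have hcpos : (0:ℚ) < 1/(c:ℚ) := by positivity
  rcases le_or_gt 4 a with h4 | h4
  · -- a ≥ 4 : each reciprocal ≤ 1/4
    have h1 : 1/(a:ℚ) ≤ 1/4 :=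
      one_div_le' (by norm_num) (by exact_mod_cast (by omega : (4:ℤ) ≤ a))
    have h2 : 1/(b:ℚ) ≤ 1/4 :=
      one_div_le' (by norm_num) (by exact_mod_cast (by omega : (4:ℤ) ≤ b))
    have h3 : 1/(c:ℚ) ≤ 1/4 :=
      one_div_le' (by norm_num) (by exact_mod_cast (by omega : (4:ℤ) ≤ c))
    refine ⟨fun _ => by linarith, ⟨fun heq => absurd heq (by intro heq; linarith),
      fun h' => ?_⟩⟩
    simp only [Prod.mk.injEq] at h'
    omega
  interval_cases a
  · -- a = 2
    rcases le_or_gt 5 b with h5 | h5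
    · have h2 : 1/(b:ℚ) ≤ 1/5 :=
        one_div_le' (by norm_num) (by exact_mod_cast (by omega : (5:ℤ) ≤ b))
      have h3 : 1/(c:ℚ) ≤ 1/5 :=
        one_div_le' (by norm_num) (by exact_mod_cast (by omega : (5:ℤ) ≤ c))
      push_cast
      refine ⟨fun _ => by linarith, ⟨fun heq => absurd heq (by intro heq; linarith),
        fun h' => ?_⟩⟩
      simp only [Prod.mk.injEq] at h'
      omega
    interval_cases b
    · -- b = 2 : expression is -1/c
      push_cast
      refine ⟨fun hpos => absurd hpos (by intro hpos; linarith),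
        ⟨fun heq => absurd heq (by intro heq; linarith), fun h' => ?_⟩⟩
      simp only [Prod.mk.injEq] at h'
      omega
    · -- b = 3 : the extremal case
      push_cast
      have key : (0:ℚ) < 1 - 1/2 - 1/3 - 1/(c:ℚ) → (7:ℤ) ≤ c := by
        intro hpos
        by_contra hlt
        push_neg at hlt
        have hle : (c:ℚ) ≤ 6 := by exact_mod_cast (by omega : (c:ℤ) ≤ 6)
        have : (1:ℚ)/6 ≤ 1/(c:ℚ) := one_div_le' hc0Q hle
        linarith
      constructor
      · intro hpos
        have h7 := key hpos
        have : 1/(c:ℚ) ≤ 1/7 :=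
          one_div_le' (by norm_num) (by exact_mod_cast h7)
        linarith
      · constructor
        · intro heq
          have h7 : 1/(c:ℚ) = 1/7 := by linarith
          have hcQ : (c:ℚ) = 7 := by
            field_simp at h7
            linarith
          have : c = 7 := by exact_mod_cast hcQ
          simp [this]
        · intro h'
          simp only [Prod.mk.injEq] at h'
          obtain ⟨-, -, rfl⟩ := h'
          norm_num
    · -- b = 4
      push_cast
      have key : (0:ℚ) < 1 - 1/2 - 1/4 - 1/(c:ℚ) → (5:ℤ) ≤ c := by
        intro hpos
        by_contra hlt
        push_neg at hlt
        have hle : (c:ℚ) ≤ 4 := by exact_mod_cast (by omega : (c:ℤ) ≤ 4)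
        have : (1:ℚ)/4 ≤ 1/(c:ℚ) := one_div_le' hc0Q hle
        linarith
      have hlb : (0:ℚ) < 1 - 1/2 - 1/4 - 1/(c:ℚ) → 1/(c:ℚ) ≤ 1/5 := fun hp =>
        one_div_le' (by norm_num) (by exact_mod_cast key hp)
      refine ⟨fun hpos => by linarith [hlb hpos],
        ⟨fun heq => absurd heq (by intro heq; linarith [hlb (by linarith)]),
          fun h' => ?_⟩⟩
      simp only [Prod.mk.injEq] at h'
      omega
  · -- a = 3
    rcases le_or_gt 4 b with h4b | h4b
    · have h2 : 1/(b:ℚ) ≤ 1/4 :=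
        one_div_le' (by norm_num) (by exact_mod_cast (by omega : (4:ℤ) ≤ b))
      have h3 : 1/(c:ℚ) ≤ 1/4 :=
        one_div_le' (by norm_num) (by exact_mod_cast (by omega : (4:ℤ) ≤ c))
      push_cast
      refine ⟨fun _ => by linarith, ⟨fun heq => absurd heq (by intro heq; linarith),
        fun h' => ?_⟩⟩
      simp only [Prod.mk.injEq] at h'
      omega
    have hb3 : b = 3 := by omega
    subst hb3
    push_cast
    have key : (0:ℚ) < 1 - 1/3 - 1/3 - 1/(c:ℚ) → (4:ℤ) ≤ c := by
      intro hpos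
      by_contra hlt
      push_neg at hlt
      have hle : (c:ℚ) ≤ 3 := by exact_mod_cast (by omega : (c:ℤ) ≤ 3)
      have : (1:ℚ)/3 ≤ 1/(c:ℚ) := one_div_le' hc0Q hle
      linarith
    have hlb : (0:ℚ) < 1 - 1/3 - 1/3 - 1/(c:ℚ) → 1/(c:ℚ) ≤ 1/4 := fun hp =>
      one_div_le' (by norm_num) (by exact_mod_cast key hp)
    refine ⟨fun hpos => by linarith [hlb hpos],
      ⟨fun heq => absurd heq (by intro heq; linarith [hlb (by linarith)]),
        fun h' => ?_⟩⟩
    simp only [Prod.mk.injEq] at h'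
    omega
end

section
/- Let m₁, m₂, m₃ be positive integers with m₁ ≤ m₂ ≤ m₃. Then the following are equivalent: (I) there exist positive integers n₁, n₂, n₃ with nᵢmᵢ ≥ 2 for all i, with nᵢ ≥ 2 for at least one i, and with ∑_{i=1}^3 1/(nᵢmᵢ) ≥ 1; (II) one of the following holds: (m₁,m₂,m₃) = (1,1,1); m₁ = m₂ = 1 and m₃ ≥ 2; m₁ = 1, m₂ = 2 and m₃ ≥ 2; m₁ = 1, m₂ = 3 and m₃ ∈ {3,4,5,6}; (m₁,m₂,m₃) = (1,4,4); m₁ = m₂ = 2 and m₃ ≥ 2; (m₁,m₂,m₃) = (2,3,3). -/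
/-!
Lowering a weight only raises `∑ 1 / (nᵢ mᵢ)`, so it suffices to test the smallest admissible
weights. If `m₁ = 1`, then `n₁ ≥ 2` and, once `m₂ ≥ 3`, the condition reads
`1/2 + 1/m₂ + 1/m₃ ≥ 1`. If all `mᵢ ≥ 2`, the weight `≥ 2` is cheapest on the largest
determinant, and the condition reads `1/m₁ + 1/m₂ + 1/(2 m₃) ≥ 1`, which forces `m₁ = 2`.
Both cases come down to `1/p + 1/q ≥ 1/2`, that is `(p - 2)(q - 2) ≤ 4`.
-/

def weightedInvSum (n₁ n₂ n₃ m₁ m₂ m₃ : ℤ) : ℚ :=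
  1 / ((n₁ : ℚ) * m₁) + 1 / ((n₂ : ℚ) * m₂) + 1 / ((n₃ : ℚ) * m₃)

theorem one_div_mul_le_one_div_of_le {a n m : ℤ} (ha : 0 < a) (h : a ≤ n * m) :
    1 / ((n : ℚ) * m) ≤ 1 / a :=
  one_div_le_one_div_of_le (by exact_mod_cast ha) (by exact_mod_cast h)

theorem one_div_mul_le_one_div_of_one_le {n m : ℤ} (hn : 1 ≤ n) (hm : 0 < m) :
    1 / ((n : ℚ) * m) ≤ 1 / m :=
  one_div_mul_le_one_div_of_le hm (le_mul_of_one_le_left hm.le hn)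

theorem one_div_mul_le_one_div_div_two {n m : ℤ} (hn : 2 ≤ n) (hm : 0 < m) :
    1 / ((n : ℚ) * m) ≤ 1 / m / 2 := by
  have h := one_div_mul_le_one_div_of_le (a := 2 * m) (n := n) (m := m) (by omega) (by nlinarith)
  push_cast at h
  linarith [show (1 : ℚ) / (2 * m) = 1 / m / 2 by ring]

theorem weightedInvSum_le_of_two_le_mul {n₁ n₂ n₃ m₁ m₂ m₃ : ℤ} (hp₁ : 2 ≤ n₁ * m₁)
    (hn₂ : 1 ≤ n₂) (hn₃ : 1 ≤ n₃) (hm₂ : 0 < m₂) (hm₃ : 0 < m₃) :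
    weightedInvSum n₁ n₂ n₃ m₁ m₂ m₃ ≤ 1 / 2 + 1 / m₂ + 1 / m₃ := by
  have h₁ := one_div_mul_le_one_div_of_le two_pos hp₁
  push_cast at h₁
  have h₂ := one_div_mul_le_one_div_of_one_le hn₂ hm₂
  have h₃ := one_div_mul_le_one_div_of_one_le hn₃ hm₃
  unfold weightedInvSum
  linarith

theorem weightedInvSum_le_of_two_le {n₁ n₂ n₃ m₁ m₂ m₃ : ℤ} (hm₁ : 0 < m₁) (h₁₂ : m₁ ≤ m₂)
    (h₂₃ : m₂ ≤ m₃) (hn₁ : 1 ≤ n₁) (hn₂ : 1 ≤ n₂) (hn₃ : 1 ≤ n₃)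
    (hbig : 2 ≤ n₁ ∨ 2 ≤ n₂ ∨ 2 ≤ n₃) :
    weightedInvSum n₁ n₂ n₃ m₁ m₂ m₃ ≤ 1 / m₁ + 1 / m₂ + 1 / m₃ / 2 := by
  have hm₂ : 0 < m₂ := hm₁.trans_le h₁₂
  have hm₃ : 0 < m₃ := hm₂.trans_le h₂₃
  have h₁ := one_div_mul_le_one_div_of_one_le hn₁ hm₁
  have h₂ := one_div_mul_le_one_div_of_one_le hn₂ hm₂
  have h₃ := one_div_mul_le_one_div_of_one_le hn₃ hm₃
  have h₁₂' : 1 / (m₂ : ℚ) ≤ 1 / m₁ :=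
    one_div_le_one_div_of_le (by exact_mod_cast hm₁) (by exact_mod_cast h₁₂)
  have h₂₃' : 1 / (m₃ : ℚ) ≤ 1 / m₂ :=
    one_div_le_one_div_of_le (by exact_mod_cast hm₂) (by exact_mod_cast h₂₃)
  unfold weightedInvSum
  rcases hbig with h | h | h
  · linarith [one_div_mul_le_one_div_div_two h hm₁]
  · linarith [one_div_mul_le_one_div_div_two h hm₂]
  · linarith [one_div_mul_le_one_div_div_two h hm₃]

theorem half_le_one_div_add_one_div_iff {p q : ℤ} (hp : 0 < p) (hq : 0 < q) :
    (1 / 2 : ℚ) ≤ 1 / p + 1 / q ↔ (p - 2) * (q - 2) ≤ 4 := by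
  rw [div_add_div _ _ (by positivity) (by positivity),
    div_le_div_iff₀ (by norm_num) (by positivity)]
  norm_cast
  constructor <;> intro h <;> linarith

theorem eq_of_half_le_one_div_add_one_div {p q : ℤ} (hp : 2 ≤ p) (hpq : p ≤ q)
    (h : (1 / 2 : ℚ) ≤ 1 / p + 1 / q) : p = 2 ∨ p = 3 ∧ q ≤ 6 ∨ p = 4 ∧ q = 4 := by
  have hpq' := (half_le_one_div_add_one_div_iff (by omega) (by omega)).1 h
  have hp4 : p ≤ 4 := by nlinarith
  interval_cases p <;> omega

theorem eq_of_one_le_one_div_add_one_div_add_one_div_div_two {m₁ m₂ m₃ : ℤ} (hm₁ : 2 ≤ m₁)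
    (h₁₂ : m₁ ≤ m₂) (h₂₃ : m₂ ≤ m₃) (h : 1 ≤ 1 / (m₁ : ℚ) + 1 / m₂ + 1 / m₃ / 2) :
    m₁ = 2 ∧ (m₂ = 2 ∨ m₂ = 3 ∧ m₃ = 3) := by
  have one_div_le_third {m : ℤ} (hm : 3 ≤ m) : 1 / (m : ℚ) ≤ 1 / 3 :=
    one_div_le_one_div_of_le (by norm_num) (by exact_mod_cast hm)
  obtain rfl : m₁ = 2 := by
    by_contra hne
    linarith [one_div_le_third (m := m₁) (by omega), one_div_le_third (m := m₂) (by omega),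
      one_div_le_third (m := m₃) (by omega)]
  have := eq_of_half_le_one_div_add_one_div (q := 2 * m₃) (by omega) (by omega)
    (by push_cast; linarith [show (1 : ℚ) / (2 * m₃) = 1 / m₃ / 2 by ring])
  omega

theorem branch_determinants_classification_general
    (m₁ m₂ m₃ : ℤ) (hm₁ : 1 ≤ m₁)
    (h₁₂ : m₁ ≤ m₂) (h₂₃ : m₂ ≤ m₃) :
    (∃ n₁ n₂ n₃ : ℤ, 1 ≤ n₁ ∧ 1 ≤ n₂ ∧ 1 ≤ n₃ ∧
        2 ≤ n₁ * m₁ ∧ 2 ≤ n₂ * m₂ ∧ 2 ≤ n₃ * m₃ ∧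
        (2 ≤ n₁ ∨ 2 ≤ n₂ ∨ 2 ≤ n₃) ∧
        1 ≤ 1 / ((n₁ : ℚ) * (m₁ : ℚ)) + 1 / ((n₂ : ℚ) * (m₂ : ℚ))
          + 1 / ((n₃ : ℚ) * (m₃ : ℚ))) ↔
      ((m₁ = 1 ∧ m₂ = 1 ∧ m₃ = 1) ∨
       (m₁ = 1 ∧ m₂ = 1 ∧ 2 ≤ m₃) ∨
       (m₁ = 1 ∧ m₂ = 2 ∧ 2 ≤ m₃) ∨
       (m₁ = 1 ∧ m₂ = 3 ∧ (m₃ = 3 ∨ m₃ = 4 ∨ m₃ = 5 ∨ m₃ = 6)) ∨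
       (m₁ = 1 ∧ m₂ = 4 ∧ m₃ = 4) ∨
       (m₁ = 2 ∧ m₂ = 2 ∧ 2 ≤ m₃) ∨
       (m₁ = 2 ∧ m₂ = 3 ∧ m₃ = 3)) := by
  constructor
  · rintro ⟨n₁, n₂, n₃, hn₁, hn₂, hn₃, hp₁, -, -, hbig, hsum⟩
    obtain rfl | hm₁ := hm₁.eq_or_lt
    · by_cases hm₂ : m₂ ≤ 2
      · omega
      have hsum' := hsum.trans
        (weightedInvSum_le_of_two_le_mul hp₁ hn₂ hn₃ (by omega) (by omega))
      have := eq_of_half_le_one_div_add_one_div (by omega) h₂₃ (by linarith)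
      omega
    · have := eq_of_one_le_one_div_add_one_div_add_one_div_div_two hm₁ h₁₂ h₂₃
        (hsum.trans (weightedInvSum_le_of_two_le (by omega) h₁₂ h₂₃ hn₁ hn₂ hn₃ hbig))
      omega
  · rintro (⟨rfl, rfl, h₃⟩ | ⟨rfl, rfl, h₃⟩ | ⟨rfl, rfl, h₃⟩ | ⟨rfl, rfl, h₃⟩ | ⟨rfl, rfl, rfl⟩ |
      ⟨rfl, rfl, h₃⟩ | ⟨rfl, rfl, rfl⟩)
    · exact ⟨2, 2, 2, by norm_num; omega⟩
    · exact ⟨2, 2, 2, by norm_num; omega⟩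
    · exact ⟨2, 1, 2, by norm_num; omega⟩
    · exact ⟨2, 1, 1, by rcases h₃ with rfl | rfl | rfl | rfl <;> norm_num⟩
    · exact ⟨2, 1, 1, by norm_num⟩
    · exact ⟨1, 1, 2, by norm_num; omega⟩
    · exact ⟨1, 1, 2, by norm_num⟩

/-- Characterization of the triples of branch determinants `m₁ ≤ m₂ ≤ m₃` for
which suitable weights `n₁, n₂, n₃` exist (Proposition 7.7). -/
theorem branch_determinants_classification
    (m₁ m₂ m₃ : ℤ) (hm₁ : 1 ≤ m₁) (hm₂ : 1 ≤ m₂) (hm₃ : 1 ≤ m₃)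
    (h₁₂ : m₁ ≤ m₂) (h₂₃ : m₂ ≤ m₃) :
    (∃ n₁ n₂ n₃ : ℤ, 1 ≤ n₁ ∧ 1 ≤ n₂ ∧ 1 ≤ n₃ ∧
        2 ≤ n₁ * m₁ ∧ 2 ≤ n₂ * m₂ ∧ 2 ≤ n₃ * m₃ ∧
        (2 ≤ n₁ ∨ 2 ≤ n₂ ∨ 2 ≤ n₃) ∧
        1 ≤ 1 / ((n₁ : ℚ) * (m₁ : ℚ)) + 1 / ((n₂ : ℚ) * (m₂ : ℚ))
          + 1 / ((n₃ : ℚ) * (m₃ : ℚ))) ↔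
      ((m₁ = 1 ∧ m₂ = 1 ∧ m₃ = 1) ∨
       (m₁ = 1 ∧ m₂ = 1 ∧ 2 ≤ m₃) ∨
       (m₁ = 1 ∧ m₂ = 2 ∧ 2 ≤ m₃) ∨
       (m₁ = 1 ∧ m₂ = 3 ∧ (m₃ = 3 ∨ m₃ = 4 ∨ m₃ = 5 ∨ m₃ = 6)) ∨
       (m₁ = 1 ∧ m₂ = 4 ∧ m₃ = 4) ∨
       (m₁ = 2 ∧ m₂ = 2 ∧ 2 ≤ m₃) ∨
       (m₁ = 2 ∧ m₂ = 3 ∧ m₃ = 3)) :=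
  branch_determinants_classification_general m₁ m₂ m₃ hm₁ h₁₂ h₂₃
end

section
/- Let u ≥ 3 be a natural number, k₁,…,k_u integers with kᵢ ≥ 2 for all i, and e ∈ ℚ with 0 < e ≤ 2. If χ = −2 + ∑_{i=1}^u (1 − 1/kᵢ) > 0, then χ²/e ≥ 1/3528. Moreover the value 1/3528 is attained: for u = 3, (k₁,k₂,k₃) = (2,3,7) and e = 2 one has χ²/e = 1/3528. -/
/-- sorted case of the (2,3,7) extremality -/
lemma aux_sorted (a b c : ℤ) (ha : 2 ≤ a) (hab : a ≤ b) (hbc : b ≤ c)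
    (h : (1:ℚ)/a + 1/b + 1/c < 1) : (1:ℚ)/a + 1/b + 1/c ≤ 41/42 := by
  have hb : 2 ≤ b := le_trans ha hab
  have hc : 2 ≤ c := le_trans hb hbc
  have haQ : (0:ℚ) < a := by exact_mod_cast lt_of_lt_of_le (by norm_num) ha
  have hbQ : (0:ℚ) < b := by exact_mod_cast lt_of_lt_of_le (by norm_num) hb
  have hcQ : (0:ℚ) < c := by exact_mod_cast lt_of_lt_of_le (by norm_num) hc
  have key : ∀ (x : ℤ) (q : ℚ), 0 < q → q ≤ (x:ℚ) → ((x:ℚ))⁻¹ ≤ q⁻¹ := by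
    intro x q hq hqx
    exact inv_anti₀ hq hqx
  have lower : ∀ (x : ℤ) (q : ℚ), 0 < (x:ℚ) → ((x:ℚ))⁻¹ < q⁻¹ → q < (x:ℚ) := by
    intro x q hx hlt
    by_contra h'
    push_neg at h'
    have := inv_anti₀ hx h'
    linarith
  simp only [one_div] at h ⊢
  rcases lt_or_ge a 3 with ha2 | ha3
  · -- a = 2
    have ha2' : a = 2 := by omega
    subst ha2'
    rcases lt_or_ge b 3 with hb2 | hb3
    · have hb2' : b = 2 := by omega
      subst hb2'
      have : (0:ℚ) < (↑c)⁻¹ := by positivity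
      norm_num at h
      linarith
    rcases lt_or_ge b 4 with hb3' | hb4
    · have : b = 3 := by omega
      subst this
      norm_num at h ⊢
      have hc7 : (7:ℤ) ≤ c := by
        have h6 : ((c:ℚ))⁻¹ < (6:ℚ)⁻¹ := by
          rw [show ((6:ℚ))⁻¹ = 1/6 by norm_num]; linarith
        have := lower c 6 hcQ h6
        have : (6:ℤ) < c := by exact_mod_cast this
        omega
      have h7 := key c 7 (by norm_num) (by exact_mod_cast hc7)
      rw [show ((7:ℚ))⁻¹ = 1/7 by norm_num] at h7
      linarith
    rcases lt_or_ge b 5 with hb4' | hb5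
    · have : b = 4 := by omega
      subst this
      norm_num at h ⊢
      have hc5 : (5:ℤ) ≤ c := by
        have h4 : ((c:ℚ))⁻¹ < (4:ℚ)⁻¹ := by
          rw [show ((4:ℚ))⁻¹ = 1/4 by norm_num]; linarith
        have := lower c 4 hcQ h4
        have : (4:ℤ) < c := by exact_mod_cast this
        omega
      have h5 := key c 5 (by norm_num) (by exact_mod_cast hc5)
      rw [show ((5:ℚ))⁻¹ = 1/5 by norm_num] at h5
      linarith
    · have h1 := key b 5 (by norm_num) (by exact_mod_cast hb5)
      have h2 := key c 5 (by norm_num) (by exact_mod_cast le_trans hb5 hbc)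
      rw [show ((5:ℚ))⁻¹ = 1/5 by norm_num] at h1 h2
      norm_num
      linarith
  rcases lt_or_ge a 4 with ha3' | ha4
  · -- a = 3
    have : a = 3 := by omega
    subst this
    rcases lt_or_ge b 4 with hb3' | hb4
    · have : b = 3 := by omega
      subst this
      norm_num at h ⊢
      have hc4 : (4:ℤ) ≤ c := by
        have h3 : ((c:ℚ))⁻¹ < (3:ℚ)⁻¹ := by
          rw [show ((3:ℚ))⁻¹ = 1/3 by norm_num]; linarith
        have := lower c 3 hcQ h3
        have : (3:ℤ) < c := by exact_mod_cast this
        omega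
      have h4 := key c 4 (by norm_num) (by exact_mod_cast hc4)
      rw [show ((4:ℚ))⁻¹ = 1/4 by norm_num] at h4
      linarith
    · have h1 := key b 4 (by norm_num) (by exact_mod_cast hb4)
      have h2 := key c 4 (by norm_num) (by exact_mod_cast le_trans hb4 hbc)
      rw [show ((4:ℚ))⁻¹ = 1/4 by norm_num] at h1 h2
      norm_num
      linarith
  · -- a ≥ 4
    have h0 := key a 4 (by norm_num) (by exact_mod_cast ha4)
    have h1 := key b 4 (by norm_num) (by exact_mod_cast le_trans ha4 hab)
    have h2 := key c 4 (by norm_num) (by exact_mod_cast le_trans (le_trans ha4 hab) hbc)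
    rw [show ((4:ℚ))⁻¹ = 1/4 by norm_num] at h0 h1 h2
    linarith

/-- unsorted version -/
lemma aux_unsorted (a b c : ℤ) (ha : 2 ≤ a) (hb : 2 ≤ b) (hc : 2 ≤ c)
    (h : (1:ℚ)/a + 1/b + 1/c < 1) : (1:ℚ)/a + 1/b + 1/c ≤ 41/42 := by
  rcases le_total a b with h1 | h1 <;> rcases le_total b c with h2 | h2 <;>
    rcases le_total a c with h3 | h3
  · have := aux_sorted a b c ha h1 h2 (by linarith); linarith
  · have := aux_sorted a b c ha h1 h2 (by linarith); linarith
  · have := aux_sorted a c b ha h3 (by linarith) (by linarith); linarith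
  · have := aux_sorted c a b hc h3 h1 (by linarith); linarith
  · have := aux_sorted b a c hb h1 h3 (by linarith); linarith
  · have := aux_sorted b c a hb h2 h3 (by linarith); linarith
  · have := aux_sorted c b a hc h2 h1 (by linarith); linarith
  · have := aux_sorted c b a hc h2 h1 (by linarith); linarith

/-- For `u ≥ 3`, `kᵢ ≥ 2` and `0 < e ≤ 2`: if `χ = -2 + ∑ (1 - 1/kᵢ) > 0` then
`χ²/e ≥ 1/3528`; and the value `1/3528` is attained for `(2,3,7)` and `e = 2`. -/
theorem volume_min_3528
    (u : ℕ) (hu : 3 ≤ u) (k : Fin u → ℤ) (hk : ∀ i, 2 ≤ k i)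
    (e : ℚ) (he₀ : 0 < e) (he₂ : e ≤ 2)
    (hpos : 0 < -2 + ∑ i, (1 - 1 / ((k i : ℚ)))) :
    (1 : ℚ) / 3528 ≤ (-2 + ∑ i, (1 - 1 / ((k i : ℚ)))) ^ 2 / e ∧
    ((-2 + ((1 - 1 / 2) + (1 - 1 / 3) + (1 - 1 / 7)) : ℚ) ^ 2) / 2 = 1 / 3528 := by
  have hkQ : ∀ i, (2:ℚ) ≤ (k i : ℚ) := fun i => by exact_mod_cast hk i
  have hkpos : ∀ i, (0:ℚ) < (k i : ℚ) := fun i => lt_of_lt_of_le (by norm_num) (hkQ i)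
  have hterm : ∀ i, (1:ℚ)/2 ≤ 1 - 1/(k i : ℚ) := by
    intro i
    have : 1/(k i : ℚ) ≤ 1/2 := one_div_le_one_div_of_le (by norm_num) (hkQ i)
    linarith
  have hchi : (1:ℚ)/42 ≤ -2 + ∑ i, (1 - 1/((k i : ℚ))) := by
    rcases Nat.lt_or_ge u 5 with h5 | h5
    · interval_cases u
      · -- u = 3
        rw [Fin.sum_univ_three] at hpos ⊢
        have h1 : (1:ℚ)/(k 0) + 1/(k 1) + 1/(k 2) < 1 := by linarith
        have := aux_unsorted (k 0) (k 1) (k 2) (hk 0) (hk 1) (hk 2) h1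
        linarith
      · -- u = 4
        rw [Fin.sum_univ_four] at hpos ⊢
        have hd : ∀ i : Fin 4, (1 - 1/((k i : ℚ))) = 1/2 ∨ (2:ℚ)/3 ≤ 1 - 1/((k i : ℚ)) := by
          intro i
          rcases eq_or_lt_of_le (hk i) with h2 | h3
          · left; rw [← h2]; norm_num
          · right
            have h3' : (3:ℚ) ≤ (k i : ℚ) := by exact_mod_cast h3
            have : 1/(k i : ℚ) ≤ 1/3 := one_div_le_one_div_of_le (by norm_num) h3'
            linarith
        rcases hd 0 with h0 | h0 <;> rcases hd 1 with h1 | h1 <;>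
          rcases hd 2 with h2 | h2 <;> rcases hd 3 with h3 | h3 <;> linarith
    · -- u ≥ 5
      have hsum : ((u:ℚ)) * (1/2) ≤ ∑ i, (1 - 1/((k i : ℚ))) := by
        have := Finset.sum_le_sum (fun i (_ : i ∈ Finset.univ) => hterm i)
        simpa [Finset.sum_const, Finset.card_univ, mul_comm] using this
      have hu5 : (5:ℚ) ≤ (u:ℚ) := by exact_mod_cast h5
      nlinarith
  refine ⟨?_, by norm_num⟩
  set χ := -2 + ∑ i, (1 - 1/((k i : ℚ))) with hχ
  have hsq : (1:ℚ)/1764 ≤ χ^2 := by nlinarith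
  have h2e : χ^2/2 ≤ χ^2/e := div_le_div_of_nonneg_left (sq_nonneg χ) he₀ he₂
  linarith
end
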